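/- arXiv:1411.4722 — 6 statements merged into one kernel-verified Lean document; each statement's English description precedes it below -/
import Mathlib

section
/- Let $\beta_1, \beta_2 < 0$, $p \ge 2$ an integer, and $\alpha_n \to \infty$. Let $x_n^* \in (0,1)$ be the unique solution of $\alpha_n\beta_1 + \alpha_n\beta_2 p x^{p-1} = \frac{1}{2}\log\frac{x}{1-x}$. Then $\lim_{n\to\infty} x_n^* / e^{2\alpha_n\beta_1} = 1$. -/
/-!
Exponentiating the equation gives `x / e^{2αβ₁} = (1 - x) · exp (2αβ₂ p x^{p-1})`. Since `β₂ < 0`,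
the second exponential is at most `1`, so `0 < x ≤ e^{2αβ₁}`; hence `x → 0` and
`α x^{p-1} ≤ α e^{2(p-1)αβ₁} → 0` because `p - 1 ≥ 1`. Both factors on the right therefore tend to `1`.
-/

open Real Filter Set Topology

lemma div_exp_eq_one_sub_mul_exp {x a b : ℝ} (hx : x ∈ Ioo 0 1)
    (h : log (x / (1 - x)) = a + b) : x / exp a = (1 - x) * exp b := by
  have h1x : 0 < 1 - x := sub_pos.2 hx.2
  have hodds : x / (1 - x) = exp a * exp b := by
    rw [← exp_add, ← h, exp_log (div_pos hx.1 h1x)]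
  field_simp at hodds ⊢
  linarith

lemma le_exp_of_log_div_one_sub_le {x a : ℝ} (hx : x ∈ Ioo 0 1)
    (h : log (x / (1 - x)) ≤ a) : x ≤ exp a := by
  have h1x : 0 < 1 - x := sub_pos.2 hx.2
  calc x ≤ x / (1 - x) := le_div_self hx.1.le h1x (by linarith [hx.1])
    _ = exp (log (x / (1 - x))) := (exp_log (div_pos hx.1 h1x)).symm
    _ ≤ exp a := exp_le_exp.2 h

lemma tendsto_mul_exp_const_mul_of_neg {ι : Type*} {l : Filter ι} {α : ι → ℝ}
    (hα : Tendsto α l atTop) {c : ℝ} (hc : c < 0) :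
    Tendsto (fun n => α n * exp (c * α n)) l (𝓝 0) := by
  have h := (tendsto_rpow_mul_exp_neg_mul_atTop_nhds_zero 1 (-c) (neg_pos.2 hc)).comp hα
  simpa only [Function.comp_def, rpow_one, neg_neg] using h

lemma tendsto_mul_pow_of_le_exp {ι : Type*} {l : Filter ι} {α y : ι → ℝ}
    (hα : Tendsto α l atTop) {c : ℝ} (hc : c < 0) {k : ℕ} (hk : k ≠ 0)
    (hy : ∀ n, 0 ≤ y n) (hyle : ∀ᶠ n in l, y n ≤ exp (c * α n)) :
    Tendsto (fun n => α n * y n ^ k) l (𝓝 0) := by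
  have hkc : k * c < 0 := mul_neg_of_pos_of_neg (by positivity) hc
  refine tendsto_of_tendsto_of_tendsto_of_le_of_le' tendsto_const_nhds
    (tendsto_mul_exp_const_mul_of_neg hα hkc) ?_ ?_
  · filter_upwards [hα.eventually_ge_atTop 0] with n hn
    exact mul_nonneg hn (pow_nonneg (hy n) k)
  · filter_upwards [hα.eventually_ge_atTop 0, hyle] with n hn hn'
    calc α n * y n ^ k ≤ α n * exp (c * α n) ^ k := by gcongr; exact hy n
      _ = α n * exp (k * c * α n) := by rw [← exp_nat_mul, mul_assoc]

theorem stmt5 (β₁ β₂ : ℝ) (hβ₁ : β₁ < 0) (hβ₂ : β₂ < 0) (p : ℕ) (hp : 2 ≤ p)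
    (α : ℕ → ℝ) (hα : Tendsto α atTop atTop)
    (x : ℕ → ℝ) (hx : ∀ n, x n ∈ Set.Ioo (0 : ℝ) 1)
    (heq : ∀ n, α n * β₁ + α n * β₂ * p * x n ^ (p - 1)
        = (1 / 2) * Real.log (x n / (1 - x n))) :
    Tendsto (fun n => x n / Real.exp (2 * α n * β₁)) atTop (nhds 1) := by
  have hlog n : log (x n / (1 - x n)) = 2 * α n * β₁ + 2 * β₂ * p * (α n * x n ^ (p - 1)) := by
    linarith [heq n]
  have hratio n : x n / exp (2 * α n * β₁)
      = (1 - x n) * exp (2 * β₂ * p * (α n * x n ^ (p - 1))) :=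
    div_exp_eq_one_sub_mul_exp (hx n) (hlog n)
  have hle : ∀ᶠ n in atTop, x n ≤ exp (2 * β₁ * α n) := by
    filter_upwards [hα.eventually_ge_atTop 0] with n hn
    refine le_exp_of_log_div_one_sub_le (hx n) ?_
    have hβ₂p : 2 * β₂ * p ≤ 0 := mul_nonpos_of_nonpos_of_nonneg (by linarith) p.cast_nonneg
    have hαx : 0 ≤ α n * x n ^ (p - 1) := mul_nonneg hn (pow_nonneg (hx n).1.le _)
    rw [hlog]
    linarith [mul_nonpos_of_nonpos_of_nonneg hβ₂p hαx]
  have hexp : Tendsto (fun n => exp (2 * β₁ * α n)) atTop (𝓝 0) :=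
    tendsto_exp_atBot.comp (hα.const_mul_atTop_of_neg (by linarith))
  have hx0 : Tendsto x atTop (𝓝 0) :=
    tendsto_of_tendsto_of_tendsto_of_le_of_le' tendsto_const_nhds hexp
      (.of_forall fun n => (hx n).1.le) hle
  have hαx : Tendsto (fun n => α n * x n ^ (p - 1)) atTop (𝓝 0) :=
    tendsto_mul_pow_of_le_exp hα (by linarith) (by omega) (fun n => (hx n).1.le) hle
  have hlim := (hx0.const_sub 1).mul ((hαx.const_mul (2 * β₂ * p)).rexp)
  simp only [sub_zero, mul_zero, Real.exp_zero, mul_one] at hlim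
  exact hlim.congr fun n => (hratio n).symm
end

section
/- Let $\beta_1, \beta_2 < 0$, $p \ge 2$ an integer, and $\alpha_n \to \infty$. Define $L_n = \sup_{0 \le x \le 1}\{\alpha_n\beta_1 x + \alpha_n\beta_2 x^p - \frac{1}{2}I(x)\}$ where $I(x) = x\log x + (1-x)\log(1-x)$. Then $\lim_{n\to\infty} L_n / e^{2\alpha_n\beta_1} = \frac{1}{2}$. -/
open Real Filter Set

private lemma key_upper (A x : ℝ) (hx : 0 < x) : x * (A - Real.log x) ≤ Real.exp (A - 1) := by
  have h := Real.add_one_le_exp (A - 1 - Real.log x)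
  have h2 : A - Real.log x ≤ Real.exp (A - 1 - Real.log x) := by linarith
  have h3 : Real.exp (A - 1 - Real.log x) = Real.exp (A - 1) / x := by
    rw [Real.exp_sub, Real.exp_log hx]
  rw [h3] at h2
  have := mul_le_mul_of_nonneg_left h2 hx.le
  calc x * (A - Real.log x) ≤ x * (Real.exp (A - 1) / x) := this
    _ = Real.exp (A - 1) := by field_simp

private lemma neg_one_sub_log : ∀ x : ℝ, 0 ≤ x → x ≤ 1 → -x ≤ (1 - x) * Real.log (1 - x) := by
  intro x hx hx1
  rcases eq_or_lt_of_le hx1 with rfl | hlt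
  · simp
  · have h1 : (0:ℝ) < 1 - x := by linarith
    have := Real.log_le_sub_one_of_pos (show (0:ℝ) < (1-x)⁻¹ by positivity)
    rw [Real.log_inv] at this
    have hlog : Real.log (1 - x) ≥ 1 - (1 - x)⁻¹ := by linarith
    have hmul := mul_le_mul_of_nonneg_left hlog h1.le
    have hinv : (1 - x) * (1 - x)⁻¹ = 1 := mul_inv_cancel₀ h1.ne'
    have he : (1 - x) * (1 - (1 - x)⁻¹) = -x := by
      rw [mul_sub, mul_one, hinv]; ring
    rw [he] at hmul
    linarith

private lemma pointwise_upper (β₁ β₂ a : ℝ) (hβ₂ : β₂ < 0) (ha : 0 ≤ a) (p : ℕ) (hp1 : 1 ≤ p)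
    (x : ℝ) (hx : x ∈ Set.Icc (0:ℝ) 1) :
    a * β₁ * x + a * β₂ * x ^ p - (1 / 2) * (x * Real.log x + (1 - x) * Real.log (1 - x))
      ≤ Real.exp (2 * a * β₁) / 2 := by
  obtain ⟨hx0, hx1⟩ := hx
  rcases eq_or_lt_of_le hx0 with rfl | hxpos
  · have h0 : (0:ℝ) ^ p = 0 := zero_pow (by omega)
    simp only [mul_zero, h0, zero_mul, Real.log_zero, sub_zero, Real.log_one, mul_one,
      mul_zero, add_zero, zero_add, zero_sub, neg_zero]
    positivity
  · have h1 : a * β₂ * x ^ p ≤ 0 := by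
      have hax : (0:ℝ) ≤ a * x ^ p := by positivity
      have hre : a * β₂ * x ^ p = β₂ * (a * x ^ p) := by ring
      rw [hre]
      exact mul_nonpos_of_nonpos_of_nonneg hβ₂.le hax
    have h2 : -x ≤ (1 - x) * Real.log (1 - x) := neg_one_sub_log x hx0 hx1
    have h3 : x * (2 * a * β₁ + 1 - Real.log x) ≤ Real.exp (2 * a * β₁) := by
      have h := key_upper (2 * a * β₁ + 1) x hxpos
      rw [show 2 * a * β₁ + 1 - 1 = 2 * a * β₁ by ring] at h
      exact h
    nlinarith

theorem stmt6 (β₁ β₂ : ℝ) (hβ₁ : β₁ < 0) (hβ₂ : β₂ < 0) (p : ℕ) (hp : 2 ≤ p)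
    (α : ℕ → ℝ) (hα : Tendsto α atTop atTop)
    (L : ℕ → ℝ)
    (hL : ∀ n, L n = sSup ((fun x : ℝ =>
        α n * β₁ * x + α n * β₂ * x ^ p
          - (1 / 2) * (x * Real.log x + (1 - x) * Real.log (1 - x))) '' Set.Icc 0 1)) :
    Tendsto (fun n => L n / Real.exp (2 * α n * β₁)) atTop (nhds (1 / 2)) := by
  set lo : ℕ → ℝ := fun n =>
    β₂ * (α n * Real.exp (((p:ℝ) - 1) * (2 * α n * β₁)))
      + (1 / 2) * (1 - Real.exp (2 * α n * β₁)) with hlo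
  -- limit of lo is 1/2
  have hc : ((p:ℝ) - 1) * (2 * β₁) < 0 := by
    have : (1:ℝ) ≤ (p:ℝ) - 1 := by
      have : (2:ℝ) ≤ (p:ℝ) := by exact_mod_cast hp
      linarith
    nlinarith
  have hT0 : Tendsto (fun y : ℝ => y * Real.exp (((p:ℝ) - 1) * (2 * β₁) * y)) atTop (nhds 0) := by
    set c : ℝ := ((p:ℝ) - 1) * (2 * β₁) with hcdef
    have h1 : Tendsto (fun y : ℝ => -c * y) atTop atTop := by
      apply Tendsto.const_mul_atTop (by linarith : (0:ℝ) < -c) tendsto_id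
    have h2 := (Real.tendsto_pow_mul_exp_neg_atTop_nhds_zero 1).comp h1
    have h3 : Tendsto (fun y : ℝ => (-c * y) * Real.exp (c * y)) atTop (nhds 0) := by
      refine h2.congr fun y => ?_
      simp [Function.comp, pow_one, neg_mul]
    have h4 := h3.const_mul (-c)⁻¹
    rw [mul_zero] at h4
    refine h4.congr fun y => ?_
    have hcne : -c ≠ 0 := by intro h; nlinarith [neg_eq_zero.mp h]
    have : (-c)⁻¹ * (-c * y * Real.exp (c * y)) = ((-c)⁻¹ * -c) * (y * Real.exp (c * y)) := by
      ring
    rw [this, inv_mul_cancel₀ hcne, one_mul]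
  have hαexp : Tendsto (fun n => α n * Real.exp (((p:ℝ) - 1) * (2 * α n * β₁))) atTop (nhds 0) := by
    have := hT0.comp hα
    refine this.congr fun n => ?_
    simp only [Function.comp]
    rw [show ((p:ℝ) - 1) * (2 * β₁) * α n = ((p:ℝ) - 1) * (2 * α n * β₁) by ring]
  have hebot : Tendsto (fun n => Real.exp (2 * α n * β₁)) atTop (nhds 0) := by
    apply Real.tendsto_exp_atBot.comp
    have : Tendsto (fun n => α n * (2 * β₁)) atTop atBot :=
      (tendsto_mul_const_atBot_of_neg (by linarith : 2 * β₁ < 0)).2 hα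
    refine this.congr fun n => by ring
  have hloT : Tendsto lo atTop (nhds (1 / 2)) := by
    have : Tendsto lo atTop (nhds (β₂ * 0 + (1/2) * (1 - 0))) :=
      (hαexp.const_mul β₂).add ((tendsto_const_nhds.sub hebot).const_mul (1/2))
    simpa using this
  have hpos : ∀ᶠ n in atTop, 0 < α n := hα.eventually_gt_atTop 0
  refine tendsto_of_tendsto_of_tendsto_of_le_of_le' hloT tendsto_const_nhds ?_ ?_
  · -- lo n ≤ L n / exp
    filter_upwards [hpos] with n hn
    set a := α n with hadef
    set x₀ := Real.exp (2 * a * β₁) with hx₀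
    have hx₀pos : 0 < x₀ := Real.exp_pos _
    have hx₀lt1 : x₀ < 1 := by
      rw [hx₀]
      apply Real.exp_lt_one_iff.mpr
      nlinarith
    have hmem : x₀ ∈ Set.Icc (0:ℝ) 1 := ⟨hx₀pos.le, hx₀lt1.le⟩
    set f : ℝ → ℝ := fun x => a * β₁ * x + a * β₂ * x ^ p
          - (1 / 2) * (x * Real.log x + (1 - x) * Real.log (1 - x)) with hf
    have hbdd : BddAbove (f '' Set.Icc (0:ℝ) 1) := by
      refine ⟨Real.exp (2 * a * β₁) / 2, ?_⟩
      rintro y ⟨x, hx, rfl⟩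
      exact pointwise_upper β₁ β₂ a hβ₂ hn.le p (by omega) x hx
    have hLe : f x₀ ≤ L n := by
      rw [hL n]
      exact le_csSup hbdd ⟨x₀, hmem, rfl⟩
    -- compute lower bound on f x₀
    have hlog : Real.log x₀ = 2 * a * β₁ := Real.log_exp _
    have hlog1 : Real.log (1 - x₀) ≤ -x₀ := by
      have := Real.log_le_sub_one_of_pos (show (0:ℝ) < 1 - x₀ by linarith)
      linarith
    have hterm : -((1 - x₀) * Real.log (1 - x₀)) ≥ x₀ * (1 - x₀) := by
      nlinarith [mul_le_mul_of_nonneg_left hlog1 (show (0:ℝ) ≤ 1 - x₀ by linarith)]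
    have hfval : f x₀ = a * β₂ * x₀ ^ p - (1/2) * ((1 - x₀) * Real.log (1 - x₀)) := by
      simp only [hf]; rw [hlog]; ring
    have hflow : a * β₂ * x₀ ^ p + (1/2) * (x₀ * (1 - x₀)) ≤ f x₀ := by
      rw [hfval]; linarith
    have hpow : x₀ ^ p = x₀ ^ (p - 1) * x₀ := by
      rw [← pow_succ]
      congr 1
      omega
    have hx₀p : x₀ ^ (p - 1) = Real.exp (((p:ℝ) - 1) * (2 * a * β₁)) := by
      rw [← Real.exp_nat_mul]
      congr 1
      have : ((p - 1 : ℕ) : ℝ) = (p:ℝ) - 1 := by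
        have : (1:ℕ) ≤ p := by omega
        push_cast [Nat.cast_sub this]
        ring
      rw [this]
    rw [le_div_iff₀ hx₀pos]
    calc lo n * x₀ = (β₂ * (a * x₀ ^ (p-1)) + (1/2) * (1 - x₀)) * x₀ := by
          simp only [hlo]; rw [← hx₀p]
      _ = a * β₂ * (x₀ ^ (p-1) * x₀) + (1/2) * (x₀ * (1 - x₀)) := by ring
      _ = a * β₂ * x₀ ^ p + (1/2) * (x₀ * (1 - x₀)) := by rw [← hpow]
      _ ≤ f x₀ := hflow
      _ ≤ L n := hLe
  · -- L n / exp ≤ 1/2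
    filter_upwards [hpos] with n hn
    have hexp : (0:ℝ) < Real.exp (2 * α n * β₁) := Real.exp_pos _
    rw [div_le_iff₀ hexp]
    rw [hL n]
    apply Real.sSup_le
    · rintro y ⟨x, hx, rfl⟩
      have := pointwise_upper β₁ β₂ (α n) hβ₂ hn.le p (by omega) x hx
      linarith
    · positivity
end

section
/- Let $\beta_1, \ldots, \beta_k < 0$, $\alpha_n \to \infty$ with $n e^{\alpha_n\beta_1} \to 0$ and $\alpha_n / n \to 0$. Define $S_n = \sum_{j=0}^{n} \binom{n}{j} e^{n\alpha_n \sum_{p=1}^k \beta_p (j/n)^p}$. Then $\lim_{n\to\infty} \frac{n \log S_n}{n^2 e^{\alpha_n\beta_1}} = 1$. -/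
open Real Filter Finset
open scoped Topology

/-!
Write `q = exp (α β₁)` and `P x = ∑ β_p x^p`. As `β_p ≤ 0` for `p ≥ 2`, the `j`-th exponent
`n α P (j / n)` is at most `j α β₁`, so the binomial theorem gives `S_n ≤ (1 + q)^n` and
`log S_n ≤ n q`. The terms `j = 0, 1` alone give `S_n ≥ 1 + n q exp (O(α / n))`, and since
`n q → 0` and `α / n → 0`, `log (1 + x) ~ x` yields `log S_n ≥ n q (1 + o(1))`.
-/

section BinomialSum

variable (P : ℝ → ℝ) (a : ℝ) (n : ℕ)

theorem sum_choose_mul_exp_le_one_add_pow (b : ℝ) (ha : 0 ≤ a)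
    (hP : ∀ x, 0 ≤ x → P x ≤ b * x) :
    ∑ j ∈ range (n + 1), (n.choose j : ℝ) * exp (n * a * P (j / n)) ≤ (1 + exp (a * b)) ^ n := by
  rw [add_comm (1 : ℝ), add_pow]
  refine sum_le_sum fun j hj => ?_
  rw [one_pow, mul_one, mul_comm, ← exp_nat_mul]
  refine mul_le_mul_of_nonneg_right (exp_le_exp.2 ?_) (by positivity)
  calc (n : ℝ) * a * P (j / n) ≤ n * a * (b * (j / n)) := by
        gcongr
        exact hP _ (by positivity)
    _ = j * (a * b) := by
        rcases n.eq_zero_or_pos with rfl | hn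
        · obtain rfl : j = 0 := by simpa using hj
          simp
        · field_simp

theorem one_add_mul_exp_le_sum_choose_mul_exp (hP : P 0 = 0) (hn : 1 ≤ n) :
    1 + n * exp (n * a * P (1 / n)) ≤
      ∑ j ∈ range (n + 1), (n.choose j : ℝ) * exp (n * a * P (j / n)) := by
  have hsub : ({0, 1} : Finset ℕ) ⊆ range (n + 1) := by
    intro j hj
    simp only [mem_insert, mem_singleton] at hj
    simp only [mem_range]
    omega
  calc 1 + n * exp (n * a * P (1 / n))
      = ∑ j ∈ {0, 1}, (n.choose j : ℝ) * exp (n * a * P (j / n)) := by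
        simp [hP]
    _ ≤ _ := sum_le_sum_of_subset_of_nonneg hsub fun _ _ _ => by positivity

end BinomialSum

section Polynomial

variable {β : ℕ → ℝ} {k : ℕ} {x : ℝ}

theorem sum_Ioc_mul_pow_nonpos (hβ : ∀ p ∈ Ioc 1 k, β p ≤ 0) (hx : 0 ≤ x) :
    ∑ p ∈ Ioc 1 k, β p * x ^ p ≤ 0 :=
  sum_nonpos fun p hp => mul_nonpos_of_nonpos_of_nonneg (hβ p hp) (by positivity)

theorem sum_mul_sq_le_sum_Ioc_mul_pow (hβ : ∀ p ∈ Ioc 1 k, β p ≤ 0) (hx₀ : 0 ≤ x) (hx₁ : x ≤ 1) :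
    (∑ p ∈ Ioc 1 k, β p) * x ^ 2 ≤ ∑ p ∈ Ioc 1 k, β p * x ^ p := by
  rw [sum_mul]
  refine sum_le_sum fun p hp => mul_le_mul_of_nonpos_left ?_ (hβ p hp)
  exact pow_le_pow_of_le_one hx₀ hx₁ (mem_Ioc.1 hp).1

end Polynomial

theorem log_le_mul_of_le_one_add_pow {s q : ℝ} {n : ℕ} (hs : 0 < s) (hq : 0 ≤ q)
    (h : s ≤ (1 + q) ^ n) : log s ≤ n * q :=
  calc log s ≤ log ((1 + q) ^ n) := log_le_log hs h
    _ = n * log (1 + q) := log_pow _ n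
    _ ≤ n * q := by
        gcongr
        linarith [log_le_sub_one_of_pos (by positivity : 0 < 1 + q)]

theorem tendsto_log_div_of_le_of_le {S q ε : ℕ → ℝ} (hq : ∀ n, 0 < q n)
    (hnq : Tendsto (fun n : ℕ => n * q n) atTop (𝓝 0)) (hε : Tendsto ε atTop (𝓝 0))
    (hlow : ∀ᶠ n in atTop, 1 + n * q n * exp (ε n) ≤ S n)
    (hup : ∀ᶠ n in atTop, S n ≤ (1 + q n) ^ n) :
    Tendsto (fun n : ℕ => log (S n) / (n * q n)) atTop (𝓝 1) := by
  have hexp : Tendsto (fun n => exp (ε n)) atTop (𝓝 1) := by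
    simpa [Function.comp_def] using (continuous_exp.tendsto 0).comp hε
  have hx : Tendsto (fun n : ℕ => n * q n * exp (ε n)) atTop (𝓝 0) := by
    simpa using hnq.mul hexp
  have hlim : Tendsto (fun n : ℕ => 2 * exp (ε n) / (n * q n * exp (ε n) + 2)) atTop (𝓝 1) := by
    simpa [Pi.div_def] using (hexp.const_mul 2).div (hx.add_const 2) (by norm_num)
  refine tendsto_of_tendsto_of_tendsto_of_le_of_le' hlim tendsto_const_nhds ?_ ?_
  · filter_upwards [hlow, eventually_ne_atTop 0] with n hlow hn
    have hq := hq n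
    have hnq : 0 < (n : ℝ) * q n := by positivity
    set x := (n : ℝ) * q n * exp (ε n)
    have hlog : 2 * x / (x + 2) ≤ log (S n) :=
      (le_log_one_add_of_nonneg (by positivity)).trans (log_le_log (by positivity) hlow)
    calc 2 * exp (ε n) / (x + 2) = 2 * x / (x + 2) / (n * q n) := by
          simp only [x]
          field_simp
      _ ≤ log (S n) / (n * q n) := by gcongr
  · filter_upwards [hlow, hup] with n hlow hup
    have hq := hq n
    have hS : 0 < S n := (by positivity : 0 < 1 + n * q n * exp (ε n)).trans_le hlow
    exact div_le_one_of_le₀ (log_le_mul_of_le_one_add_pow hS hq.le hup)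
      (by positivity)

theorem stmt10 (k : ℕ) (hk : 1 ≤ k) (β : ℕ → ℝ)
    (hβ : ∀ p ∈ Finset.Icc 1 k, β p < 0)
    (α : ℕ → ℝ) (hα : Tendsto α atTop atTop)
    (h1 : Tendsto (fun n : ℕ => (n : ℝ) * Real.exp (α n * β 1)) atTop (nhds 0))
    (h2 : Tendsto (fun n : ℕ => α n / n) atTop (nhds 0))
    (S : ℕ → ℝ)
    (hS : ∀ n : ℕ, S n = ∑ j ∈ Finset.range (n + 1), (n.choose j : ℝ) *
        Real.exp ((n : ℝ) * α n * ∑ p ∈ Finset.Icc 1 k, β p * ((j : ℝ) / n) ^ p)) :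
    Tendsto (fun n : ℕ => ((n : ℝ) * Real.log (S n)) / ((n : ℝ) ^ 2 * Real.exp (α n * β 1)))
      atTop (nhds 1) := by
  set B := ∑ p ∈ Ioc 1 k, β p
  have hβ' : ∀ p ∈ Ioc 1 k, β p ≤ 0 := fun p hp => (hβ p (Ioc_subset_Icc_self hp)).le
  have hsplit : ∀ x : ℝ, ∑ p ∈ Icc 1 k, β p * x ^ p = β 1 * x + ∑ p ∈ Ioc 1 k, β p * x ^ p :=
    fun x => by rw [← add_sum_Ioc_eq_sum_Icc hk, pow_one]
  have hratio : Tendsto (fun n : ℕ => log (S n) / (n * exp (α n * β 1))) atTop (𝓝 1) := by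
    refine tendsto_log_div_of_le_of_le (ε := fun n => B * (α n / n)) (fun n => exp_pos _) h1
      (by simpa using h2.const_mul B) ?_ ?_
    · filter_upwards [eventually_ge_atTop 1, hα.eventually_ge_atTop 0] with n hn hαn
      have hn₀ : (0 : ℝ) < n := by exact_mod_cast hn
      have hinv : 1 / (n : ℝ) ≤ 1 := by rw [div_le_one hn₀]; exact_mod_cast hn
      have hexponent : α n * β 1 + B * (α n / n) ≤
          n * α n * ∑ p ∈ Icc 1 k, β p * (1 / n) ^ p := by
        calc α n * β 1 + B * (α n / n) = n * α n * (β 1 * (1 / n) + B * (1 / n) ^ 2) := by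
              field_simp
          _ ≤ _ := by
              rw [hsplit]
              gcongr
              exact sum_mul_sq_le_sum_Ioc_mul_pow hβ' (by positivity) hinv
      rw [hS, mul_assoc, ← exp_add]
      refine le_trans ?_ (one_add_mul_exp_le_sum_choose_mul_exp
        (fun x => ∑ p ∈ Icc 1 k, β p * x ^ p) (α n) n
        (sum_eq_zero fun p hp => by simp [Nat.one_le_iff_ne_zero.1 (mem_Icc.1 hp).1]) hn)
      gcongr
    · filter_upwards [hα.eventually_ge_atTop 0] with n hαn
      rw [hS]
      refine sum_choose_mul_exp_le_one_add_pow (fun x => ∑ p ∈ Icc 1 k, β p * x ^ p) (α n) n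
        (β 1) hαn fun x hx => ?_
      rw [hsplit]
      linarith [sum_Ioc_mul_pow_nonpos hβ' hx]
  refine hratio.congr' ?_
  filter_upwards [eventually_ne_atTop 0] with n hn
  field_simp
end

section
/- Let $\beta_1, \ldots, \beta_k < 0$, $\alpha_n \to \infty$ with $n e^{\alpha_n \beta_1} \to \lambda \in (0, \infty)$. Then $\sum_{j=0}^{n} \binom{n}{j} e^{\alpha_n\beta_1 j + \sum_{p=2}^k \alpha_n \beta_p j^p / n^{p-1}} \to e^{\lambda}$ as $n \to \infty$. -/
/-!
Write `cₙ = exp (αₙ β₁)`, so that `n cₙ → λ`. The terms with `p ≥ 2` are nonpositive, so the sum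
is at most `∑ⱼ C(n, j) cₙʲ = (1 + cₙ)ⁿ → e^λ`. Conversely, taking logarithms in `n cₙ → λ` gives
`αₙ = O(log n)`, hence `αₙ / n^(p-1) → 0` for `p ≥ 2`: for each fixed `j` the `j`-th term tends
to the Poisson weight `λʲ / j!`, and truncating the sum at a fixed `M` bounds it from below by a
quantity tending to `∑_{j < M} λʲ / j!`, which is as close to `e^λ` as we like.
-/

open Real Filter Finset Topology

lemma tendsto_sum_range_of_hasSum_of_le {f : ℕ → ℕ → ℝ} {g u : ℕ → ℝ} {L : ℝ}
    (hf₀ : ∀ n j, 0 ≤ f n j) (hf : ∀ j, Tendsto (fun n => f n j) atTop (𝓝 (g j)))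
    (hg : HasSum g L) (hu : Tendsto u atTop (𝓝 L))
    (hle : ∀ᶠ n in atTop, ∑ j ∈ range (n + 1), f n j ≤ u n) :
    Tendsto (fun n => ∑ j ∈ range (n + 1), f n j) atTop (𝓝 L) := by
  refine tendsto_order.2 ⟨fun a ha => ?_, fun a ha => ?_⟩
  · obtain ⟨M, hM⟩ := (hg.tendsto_sum_nat.eventually_const_lt ha).exists
    have hfM : Tendsto (fun n => ∑ j ∈ range M, f n j) atTop (𝓝 (∑ j ∈ range M, g j)) :=
      tendsto_finsetSum _ fun j _ => hf j
    filter_upwards [hfM.eventually_const_lt hM, eventually_ge_atTop M] with n hn hnM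
    exact hn.trans_le <| sum_le_sum_of_subset_of_nonneg (range_subset_range.2 (by omega))
      fun j _ _ => hf₀ n j
  · filter_upwards [hle, hu.eventually_lt_const ha] with n h₁ h₂ using h₁.trans_lt h₂

lemma tendsto_div_natCast_of_tendsto_natCast_mul_exp {a : ℕ → ℝ} {b lam : ℝ} (hb : b ≠ 0)
    (hlam : 0 < lam) (h : Tendsto (fun n : ℕ => (n : ℝ) * exp (a n * b)) atTop (𝓝 lam)) :
    Tendsto (fun n : ℕ => a n / n) atTop (𝓝 0) := by
  have hlog : Tendsto (fun n : ℕ => log ((n : ℝ) * exp (a n * b)) / n) atTop (𝓝 0) :=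
    ((continuousAt_log hlam.ne').tendsto.comp h).div_atTop tendsto_natCast_atTop_atTop
  have hlog_div : Tendsto (fun n : ℕ => log n / n) atTop (𝓝 0) :=
    isLittleO_log_id_atTop.tendsto_div_nhds_zero.comp tendsto_natCast_atTop_atTop
  have := (hlog.sub hlog_div).div_const b
  rw [sub_zero, zero_div] at this
  refine this.congr' ?_
  filter_upwards [eventually_ne_atTop 0] with n hn
  have hn' : (n : ℝ) ≠ 0 := Nat.cast_ne_zero.2 hn
  rw [log_mul hn' (exp_pos _).ne', log_exp]
  field_simp
  ring

lemma tendsto_div_pow_of_tendsto_div_natCast {a : ℕ → ℝ}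
    (ha : Tendsto (fun n : ℕ => a n / n) atTop (𝓝 0)) {q : ℕ} (hq : 1 ≤ q) :
    Tendsto (fun n : ℕ => a n / (n : ℝ) ^ q) atTop (𝓝 0) := by
  obtain ⟨r, rfl⟩ := Nat.exists_eq_add_of_le hq
  have := ha.mul ((tendsto_inv_atTop_nhds_zero_nat (𝕜 := ℝ)).pow r)
  rw [zero_mul] at this
  refine this.congr fun n => ?_
  ring

lemma tendsto_sum_Icc_mul_pow_div_pow {a : ℕ → ℝ}
    (ha : Tendsto (fun n : ℕ => a n / n) atTop (𝓝 0)) (β : ℕ → ℝ) (k j : ℕ) :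
    Tendsto (fun n : ℕ => ∑ p ∈ Icc 2 k, a n * β p * (j : ℝ) ^ p / (n : ℝ) ^ (p - 1))
      atTop (𝓝 0) := by
  rw [← sum_const_zero (s := Icc 2 k)]
  refine tendsto_finsetSum _ fun p hp => ?_
  have := (tendsto_div_pow_of_tendsto_div_natCast ha (q := p - 1)
    (by have := (mem_Icc.1 hp).1; omega)).mul_const (β p * (j : ℝ) ^ p)
  rw [zero_mul] at this
  exact this.congr fun n => by ring

lemma sum_Icc_mul_pow_div_pow_nonpos {a : ℝ} (ha : 0 ≤ a) {β : ℕ → ℝ} {k : ℕ}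
    (hβ : ∀ p ∈ Icc 2 k, β p ≤ 0) {x : ℝ} (hx : 0 ≤ x) (n : ℕ) :
    ∑ p ∈ Icc 2 k, a * β p * x ^ p / (n : ℝ) ^ (p - 1) ≤ 0 :=
  sum_nonpos fun p hp => div_nonpos_of_nonpos_of_nonneg
    (mul_nonpos_of_nonpos_of_nonneg (mul_nonpos_of_nonneg_of_nonpos ha (hβ p hp))
      (pow_nonneg hx p))
    (by positivity)

theorem stmt12 (k : ℕ) (hk : 1 ≤ k) (β : ℕ → ℝ)
    (hβ : ∀ p ∈ Finset.Icc 1 k, β p < 0)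
    (α : ℕ → ℝ) (hα : Tendsto α atTop atTop)
    (lam : ℝ) (hlam : 0 < lam)
    (h : Tendsto (fun n : ℕ => (n : ℝ) * Real.exp (α n * β 1)) atTop (nhds lam)) :
    Tendsto (fun n : ℕ => ∑ j ∈ Finset.range (n + 1), (n.choose j : ℝ) *
        Real.exp (α n * β 1 * j +
          ∑ p ∈ Finset.Icc 2 k, α n * β p * (j : ℝ) ^ p / (n : ℝ) ^ (p - 1)))
      atTop (nhds (Real.exp lam)) := by
  have hβ₁ : β 1 < 0 := hβ 1 (mem_Icc.2 ⟨le_rfl, hk⟩)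
  set E : ℕ → ℕ → ℝ := fun n j =>
    ∑ p ∈ Icc 2 k, α n * β p * (j : ℝ) ^ p / (n : ℝ) ^ (p - 1)
  have hsplit : ∀ n j : ℕ, (n.choose j : ℝ) * exp (α n * β 1 * j + E n j) =
      n.choose j * exp (α n * β 1) ^ j * exp (E n j) := fun n j => by
    rw [exp_add, mul_comm (α n * β 1), exp_nat_mul, mul_assoc]
  have hE_lim : ∀ j, Tendsto (fun n => E n j) atTop (𝓝 0) :=
    tendsto_sum_Icc_mul_pow_div_pow
      (tendsto_div_natCast_of_tendsto_natCast_mul_exp hβ₁.ne hlam h) β k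
  have hE_nonpos : ∀ᶠ n in atTop, ∀ j, E n j ≤ 0 := by
    filter_upwards [hα.eventually_ge_atTop 0] with n hn j
    exact sum_Icc_mul_pow_div_pow_nonpos hn
      (fun p hp => (hβ p (Icc_subset_Icc_left one_le_two hp)).le) j.cast_nonneg n
  refine tendsto_sum_range_of_hasSum_of_le (fun n j => by positivity) (fun j => ?_)
    (exp_eq_exp_ℝ ▸ NormedSpace.expSeries_div_hasSum_exp lam)
    (tendsto_one_add_pow_exp_of_tendsto h) ?_
  · have := (ProbabilityTheory.tendsto_choose_mul_pow_atTop j h).mul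
      ((continuous_exp.tendsto 0).comp (hE_lim j))
    rw [exp_zero, mul_one] at this
    exact this.congr fun n => (hsplit n j).symm
  · filter_upwards [hE_nonpos] with n hn
    calc ∑ j ∈ range (n + 1), (n.choose j : ℝ) * exp (α n * β 1 * j + E n j)
        ≤ ∑ j ∈ range (n + 1), (n.choose j : ℝ) * exp (α n * β 1) ^ j :=
          sum_le_sum fun j _ => by
            rw [hsplit]
            exact mul_le_of_le_one_right (by positivity) (exp_le_one_iff.2 (hn j))
      _ = (1 + exp (α n * β 1)) ^ n := by
          rw [add_comm (1 : ℝ), add_pow]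
          simp [mul_comm]
end

section
/- Let $\beta_1, \ldots, \beta_k < 0$ with $\liminf_{n\to\infty} \alpha_n / n > (\log 2)/|\beta_1|$. Then $\lim_{n\to\infty} \frac{\sum_{j=0}^{n} j \binom{n}{j} e^{n\alpha_n \sum_{p=1}^k \beta_p (j/n)^p}}{n\, e^{n\alpha_n \sum_{p=1}^k \beta_p (1/n)^p}} = 1$. -/
/-!
Pick `c` strictly between `log 2 / |β 1|` and the liminf of `α n / n`. The `j = 1` term of the
numerator is the denominator. Since every `β p` is nonpositive, the exponent at `j ≥ 2` exceeds the
one at `j = 1` by at most `α n * β 1 * (j - 1) ≤ c * n * β 1`, so all other terms together are at most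
`(2 * exp (c * β 1)) ^ n` times the `j = 1` term, and `2 * exp (c * β 1) < 1`.
-/

open Real Filter Finset

/- In `ℝ` the liminf of a sequence that is not bounded below is the junk value `0`. -/
theorem Filter.eventually_lt_of_lt_liminf_of_nonneg {ι : Type*} {f : Filter ι} {u : ι → ℝ} {b : ℝ}
    (hb : 0 ≤ b) (h : b < liminf u f) : ∀ᶠ x in f, b < u x :=
  eventually_lt_of_lt_liminf h <| by
    by_contra hu
    rw [Real.liminf_of_not_isBoundedUnder hu] at h
    exact hb.not_gt h

def weightedPowerSum (β : ℕ → ℝ) (k : ℕ) (x : ℝ) : ℝ := ∑ p ∈ Icc 1 k, β p * x ^ p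

section
variable {β : ℕ → ℝ} {k : ℕ}

theorem weightedPowerSum_le_add_of_le (hk : 1 ≤ k) (hβ : ∀ p ∈ Icc 1 k, β p ≤ 0) {x y : ℝ}
    (hx : 0 ≤ x) (hxy : x ≤ y) :
    weightedPowerSum β k y ≤ weightedPowerSum β k x + β 1 * (y - x) := by
  have h1 : 1 ∈ Icc 1 k := mem_Icc.2 ⟨le_rfl, hk⟩
  have hrest : ∑ p ∈ (Icc 1 k).erase 1, β p * y ^ p ≤ ∑ p ∈ (Icc 1 k).erase 1, β p * x ^ p :=
    sum_le_sum fun p hp =>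
      mul_le_mul_of_nonpos_left (pow_le_pow_left₀ hx hxy p) (hβ p (mem_of_mem_erase hp))
  unfold weightedPowerSum
  rw [← add_sum_erase _ _ h1, ← add_sum_erase _ _ h1]
  linarith

theorem mul_choose_mul_exp_le (hk : 1 ≤ k) (hβ : ∀ p ∈ Icc 1 k, β p ≤ 0) {n j : ℕ} {a c : ℝ}
    (hc : 0 ≤ c) (hca : c * n ≤ a) (hj : j ≠ 1) (hjn : j ≤ n) :
    j * (n.choose j : ℝ) * exp (n * a * weightedPowerSum β k (j / n)) ≤
      n * (n.choose j : ℝ) * (exp (n * a * weightedPowerSum β k (1 / n)) * exp (c * β 1) ^ n) := by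
  obtain rfl | hj2 : j = 0 ∨ 2 ≤ j := by omega
  · simp only [CharP.cast_eq_zero, zero_mul]
    positivity
  have hβ1 : β 1 ≤ 0 := hβ 1 (mem_Icc.2 ⟨le_rfl, hk⟩)
  have hn : (0 : ℝ) < n := by norm_cast; omega
  have hj2' : (2 : ℝ) ≤ j := by exact_mod_cast hj2
  have ha : 0 ≤ a := by nlinarith
  have hF : weightedPowerSum β k (j / n) ≤ weightedPowerSum β k (1 / n) + β 1 * ((j - 1) / n) := by
    have := weightedPowerSum_le_add_of_le hk hβ (x := 1 / n) (y := j / n) (by positivity)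
      (by gcongr; linarith)
    rwa [← sub_div] at this
  have hexponent : n * a * weightedPowerSum β k (j / n) ≤
      n * a * weightedPowerSum β k (1 / n) + n * (c * β 1) := by
    have hmul := mul_le_mul_of_nonneg_left hF (by positivity : (0 : ℝ) ≤ n * a)
    have hscale : n * a * (β 1 * ((j - 1) / n)) = a * β 1 * (j - 1) := by field_simp
    have : a * β 1 * (j - 1) ≤ n * (c * β 1) := by nlinarith [mul_nonpos_of_nonneg_of_nonpos ha hβ1]
    linarith
  rw [← exp_nat_mul, ← exp_add]
  gcongr

theorem mul_exp_le_sum_mul_choose_mul_exp {n : ℕ} (hn : 1 ≤ n) (a : ℝ) :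
    n * exp (n * a * weightedPowerSum β k (1 / n)) ≤
      ∑ j ∈ range (n + 1), j * (n.choose j : ℝ) * exp (n * a * weightedPowerSum β k (j / n)) := by
  have h1 : 1 ∈ range (n + 1) := mem_range.2 (by omega)
  have := single_le_sum (f := fun j : ℕ => j * (n.choose j : ℝ) *
    exp (n * a * weightedPowerSum β k (j / n))) (fun j _ => by positivity) h1
  simpa only [Nat.cast_one, one_mul, Nat.choose_one_right] using this

theorem sum_mul_choose_mul_exp_le (hk : 1 ≤ k) (hβ : ∀ p ∈ Icc 1 k, β p ≤ 0) {n : ℕ} {a c : ℝ}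
    (hn : 1 ≤ n) (hc : 0 ≤ c) (hca : c * n ≤ a) :
    ∑ j ∈ range (n + 1), j * (n.choose j : ℝ) * exp (n * a * weightedPowerSum β k (j / n)) ≤
      n * exp (n * a * weightedPowerSum β k (1 / n)) * (1 + (2 * exp (c * β 1)) ^ n) := by
  set E := exp (n * a * weightedPowerSum β k (1 / n))
  have h1 : 1 ∈ range (n + 1) := mem_range.2 (by omega)
  have htail : ∑ j ∈ (range (n + 1)).erase 1,
      j * (n.choose j : ℝ) * exp (n * a * weightedPowerSum β k (j / n)) ≤
      n * E * (2 * exp (c * β 1)) ^ n :=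
    calc _ ≤ ∑ j ∈ (range (n + 1)).erase 1, n * (n.choose j : ℝ) * (E * exp (c * β 1) ^ n) :=
          sum_le_sum fun j hj => mul_choose_mul_exp_le hk hβ hc hca (ne_of_mem_erase hj)
            (Nat.lt_succ_iff.1 (mem_range.1 (mem_of_mem_erase hj)))
      _ ≤ ∑ j ∈ range (n + 1), n * (n.choose j : ℝ) * (E * exp (c * β 1) ^ n) :=
          sum_le_sum_of_subset_of_nonneg (erase_subset _ _) fun _ _ _ => by positivity
      _ = n * E * (2 * exp (c * β 1)) ^ n := by
          rw [← sum_mul, ← mul_sum, ← Nat.cast_sum, Nat.sum_range_choose]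
          push_cast
          ring
  rw [← add_sum_erase _ _ h1]
  simp only [Nat.cast_one, one_mul, Nat.choose_one_right]
  linarith

end

theorem tendsto_div_of_le_of_le_mul_one_add_pow {S T : ℕ → ℝ} {r : ℝ} (hr0 : 0 ≤ r)
    (hr1 : r < 1) (h : ∀ᶠ n in atTop, 0 < T n ∧ T n ≤ S n ∧ S n ≤ T n * (1 + r ^ n)) :
    Tendsto (fun n => S n / T n) atTop (nhds 1) := by
  have hupper : Tendsto (fun n => 1 + r ^ n) atTop (nhds 1) := by
    simpa using (tendsto_pow_atTop_nhds_zero_of_lt_one hr0 hr1).const_add 1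
  refine tendsto_of_tendsto_of_tendsto_of_le_of_le' tendsto_const_nhds hupper ?_ ?_
  · filter_upwards [h] with n ⟨hT, hTS, _⟩
    rwa [le_div_iff₀ hT, one_mul]
  · filter_upwards [h] with n ⟨hT, _, hST⟩
    rwa [div_le_iff₀ hT, mul_comm]

theorem stmt17 (k : ℕ) (hk : 1 ≤ k) (β : ℕ → ℝ)
    (hβ : ∀ p ∈ Finset.Icc 1 k, β p < 0)
    (α : ℕ → ℝ)
    (h : Real.log 2 / |β 1| < Filter.liminf (fun n : ℕ => α n / n) atTop) :
    Tendsto (fun n : ℕ =>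
        (∑ j ∈ Finset.range (n + 1), (j : ℝ) * (n.choose j : ℝ) *
            Real.exp ((n : ℝ) * α n * ∑ p ∈ Finset.Icc 1 k, β p * ((j : ℝ) / n) ^ p)) /
        ((n : ℝ) * Real.exp ((n : ℝ) * α n * ∑ p ∈ Finset.Icc 1 k, β p * ((1 : ℝ) / n) ^ p)))
      atTop (nhds 1) := by
  have hβ1 : β 1 < 0 := hβ 1 (mem_Icc.2 ⟨le_rfl, hk⟩)
  have hb : 0 < log 2 / |β 1| := div_pos (log_pos one_lt_two) (abs_pos.2 hβ1.ne)
  obtain ⟨c, hbc, hc⟩ := exists_between h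
  have hc0 : 0 ≤ c := (hb.trans hbc).le
  have hr : 2 * exp (c * β 1) < 1 := by
    have : c * β 1 < -log 2 := by
      rw [div_lt_iff₀ (abs_pos.2 hβ1.ne), abs_of_neg hβ1] at hbc
      linarith
    calc 2 * exp (c * β 1) < 2 * exp (-log 2) := by gcongr
      _ = 1 := by rw [exp_neg, exp_log two_pos]; norm_num
  refine tendsto_div_of_le_of_le_mul_one_add_pow (by positivity) hr ?_
  filter_upwards [eventually_lt_of_lt_liminf_of_nonneg hc0 hc, eventually_ge_atTop 1]
    with n hcn hn
  have hca : c * n ≤ α n := (lt_div_iff₀ (by positivity)).1 hcn |>.le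
  exact ⟨by positivity, mul_exp_le_sum_mul_choose_mul_exp hn _,
    sum_mul_choose_mul_exp_le hk (fun p hp => (hβ p hp).le) hn hc0 hca⟩
end

section
/- Let $\beta_1, \beta_2 < 0$, $p \ge 2$, $\alpha_n \to \infty$, and let $x_n^* \in (0,1)$ satisfy $\alpha_n\beta_1 + \alpha_n\beta_2 p (x_n^*)^{p-1} = \frac{1}{2}\log\frac{x_n^*}{1-x_n^*}$. Then $x_n^* \le e^{2\alpha_n\beta_1}$ for all $n$, and $\alpha_n (x_n^*)^{p-1} \to 0$ as $n \to \infty$. -/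
open Real Filter Set

lemma aux_mul_exp (c : ℝ) (hc : c < 0) :
    Tendsto (fun t : ℝ => t * Real.exp (c * t)) atTop (nhds 0) := by
  have h := Real.tendsto_pow_mul_exp_neg_atTop_nhds_zero 1
  have hmap : Tendsto (fun t : ℝ => -c * t) atTop atTop :=
    Tendsto.const_mul_atTop (by linarith) tendsto_id
  have h2 := (h.comp hmap).const_mul (-c)⁻¹
  simp only [mul_zero] at h2
  have : (fun t : ℝ => t * Real.exp (c * t))
      = fun t : ℝ => (-c)⁻¹ * ((fun y : ℝ => y ^ 1 * Real.exp (-y)) ((-c) * t)) := by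
    funext t
    have hne : (-c) ≠ 0 := by linarith
    show t * Real.exp (c * t) = (-c)⁻¹ * ((-c * t) ^ 1 * Real.exp (-(-c * t)))
    rw [pow_one, show -(-c * t) = c * t by ring,
      show (-c)⁻¹ * (-c * t * Real.exp (c * t)) = (-c)⁻¹ * (-c) * (t * Real.exp (c * t)) by ring,
      inv_mul_cancel₀ hne, one_mul]
  rw [this]
  exact h2

theorem stmt19 (β₁ β₂ : ℝ) (hβ₁ : β₁ < 0) (hβ₂ : β₂ < 0) (p : ℕ) (hp : 2 ≤ p)
    (α : ℕ → ℝ) (hα : Tendsto α atTop atTop)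
    (x : ℕ → ℝ) (hx : ∀ n, x n ∈ Set.Ioo (0 : ℝ) 1)
    (heq : ∀ n, α n * β₁ + α n * β₂ * p * x n ^ (p - 1)
        = (1 / 2) * Real.log (x n / (1 - x n))) :
    (∀ n, x n ≤ Real.exp (2 * α n * β₁)) ∧
    Tendsto (fun n => α n * x n ^ (p - 1)) atTop (nhds 0) := by
  have hq1 : (1 : ℝ) ≤ ((p - 1 : ℕ) : ℝ) := by
    have : 1 ≤ p - 1 := by omega
    exact_mod_cast this
  have h1 : ∀ n, x n ≤ Real.exp (2 * α n * β₁) := by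
    intro n
    obtain ⟨hx0, hx1⟩ := hx n
    rcases le_or_gt 0 (α n) with hα0 | hα0
    · have hfrac : x n / (1 - x n)
          = Real.exp (2 * α n * β₁ + 2 * (α n * β₂ * p * x n ^ (p - 1))) := by
        rw [← Real.exp_log (div_pos hx0 (by linarith))]
        congr 1
        have := heq n
        linarith
      have hxle : x n ≤ x n / (1 - x n) := by
        rw [le_div_iff₀ (by linarith)]
        nlinarith
      have hterm : α n * β₂ * p * x n ^ (p - 1) ≤ 0 := by
        have hβ : α n * β₂ ≤ 0 := mul_nonpos_of_nonneg_of_nonpos hα0 hβ₂.le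
        have hxp : (0 : ℝ) ≤ x n ^ (p - 1) := pow_nonneg hx0.le _
        have hpn : (0 : ℝ) ≤ (p : ℝ) := Nat.cast_nonneg p
        exact mul_nonpos_of_nonpos_of_nonneg
          (mul_nonpos_of_nonpos_of_nonneg hβ hpn) hxp
      calc x n ≤ x n / (1 - x n) := hxle
        _ ≤ Real.exp (2 * α n * β₁) := by
            rw [hfrac]; exact Real.exp_le_exp.2 (by linarith)
    · have : (1 : ℝ) ≤ Real.exp (2 * α n * β₁) := Real.one_le_exp (by nlinarith)
      linarith
  refine ⟨h1, ?_⟩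
  set c : ℝ := 2 * ((p - 1 : ℕ) : ℝ) * β₁ with hc
  have hcneg : c < 0 := by nlinarith
  have hg : Tendsto (fun n => α n * Real.exp (c * α n)) atTop (nhds 0) :=
    (aux_mul_exp c hcneg).comp hα
  have heven : ∀ᶠ n in atTop, 0 ≤ α n := hα.eventually_ge_atTop 0
  apply tendsto_of_tendsto_of_tendsto_of_le_of_le' tendsto_const_nhds hg
  · filter_upwards [heven] with n hn
    exact mul_nonneg hn (pow_nonneg (hx n).1.le _)
  · filter_upwards [heven] with n hn
    have hxp : x n ^ (p - 1) ≤ Real.exp (2 * α n * β₁) ^ (p - 1) :=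
      pow_le_pow_left₀ (hx n).1.le (h1 n) _
    have hexp : Real.exp (2 * α n * β₁) ^ (p - 1) = Real.exp (c * α n) := by
      rw [← Real.exp_nat_mul]
      congr 1
      rw [hc]; ring
    rw [← hexp]
    exact mul_le_mul_of_nonneg_left hxp hn
end
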